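/- Fix an integer b ≥ 2 and a real number η with 0 < η < 1. There exists a constant K > 0 (depending only on b and η) such that for all real t ≥ 1, the sum ∑ 1/(ℓ·ord_ℓ(b)), taken over all primes ℓ ≥ t with ℓ ∤ b and ord_ℓ(b) < ℓ^η, is at most K·t^{−(1−η)}. -/

import Mathlib

/-!
Group the primes `ℓ` by `d = ord_ℓ(b)`. Every such `ℓ` divides `b ^ d - 1`, which has at most
`d (log₂ b + 1)` prime factors, and `ℓ ≥ max t (d ^ (1/η))`; so the primes of order `d` contribute
at most `(log₂ b + 1) / max t (d ^ (1/η))`. Summing over `d`, the range `d ≤ t ^ η` gives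
`O(t ^ η / t)` and the tail `∑_{d > t^η} d ^ (-1/η)` is `O(t ^ (η - 1))` by the integral test.
-/

lemma two_pow_card_primeFactors_le {n : ℕ} (hn : n ≠ 0) : 2 ^ n.primeFactors.card ≤ n :=
  calc 2 ^ n.primeFactors.card ≤ ∏ p ∈ n.primeFactors, p :=
        Finset.pow_card_le_prod _ _ _ fun _ hp => (Nat.prime_of_mem_primeFactors hp).two_le
    _ ≤ n := Nat.le_of_dvd (Nat.pos_of_ne_zero hn) (Nat.prod_primeFactors_dvd n)

lemma card_primeFactors_pow_sub_one_le (b d : ℕ) :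
    (b ^ d - 1).primeFactors.card ≤ d * (Nat.log 2 b + 1) := by
  rcases eq_or_ne (b ^ d - 1) 0 with h | h
  · simp [h]
  rw [← Nat.pow_le_pow_iff_right one_lt_two]
  calc 2 ^ (b ^ d - 1).primeFactors.card ≤ b ^ d - 1 := two_pow_card_primeFactors_le h
    _ ≤ (2 ^ (Nat.log 2 b + 1)) ^ d :=
        (Nat.sub_le _ _).trans (Nat.pow_le_pow_left (Nat.lt_pow_succ_log_self one_lt_two b).le d)
    _ = 2 ^ (d * (Nat.log 2 b + 1)) := by rw [← pow_mul, mul_comm]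

lemma dvd_pow_orderOf_natCast_sub_one (b ℓ : ℕ) : ℓ ∣ b ^ orderOf (b : ZMod ℓ) - 1 := by
  rcases Nat.eq_zero_or_pos (b ^ orderOf (b : ZMod ℓ)) with h | h
  · simp [h]
  rw [← ZMod.natCast_eq_zero_iff, Nat.cast_sub h, Nat.cast_pow, pow_orderOf_eq_one, Nat.cast_one,
    sub_self]

lemma orderOf_natCast_pos {b ℓ : ℕ} (hℓ : ℓ.Prime) (hℓb : ¬ℓ ∣ b) : 0 < orderOf (b : ZMod ℓ) := by
  have := Fact.mk hℓ
  have hb : (b : ZMod ℓ) ≠ 0 := by rwa [Ne, ZMod.natCast_eq_zero_iff]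
  refine orderOf_pos_iff.mpr
    (isOfFinOrder_iff_pow_eq_one.mpr ⟨ℓ - 1, ?_, ZMod.pow_card_sub_one_eq_one hb⟩)
  have := hℓ.two_le
  omega

lemma mem_primeFactors_pow_orderOf_natCast_sub_one {b ℓ : ℕ} (hb : 2 ≤ b) (hℓ : ℓ.Prime)
    (hℓb : ¬ℓ ∣ b) : ℓ ∈ (b ^ orderOf (b : ZMod ℓ) - 1).primeFactors := by
  have hbd : 2 ≤ b ^ orderOf (b : ZMod ℓ) :=
    hb.trans (Nat.le_self_pow (orderOf_natCast_pos hℓ hℓb).ne' b)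
  exact Nat.mem_primeFactors.mpr ⟨hℓ, dvd_pow_orderOf_natCast_sub_one b ℓ, by omega⟩

lemma tsum_rpow_neg_nat_add_le {p x : ℝ} (hp : 1 < p) (hx : 0 < x) {N : ℕ} (hxN : x ≤ N) :
    ∑' n : ℕ, ((n + N + 1 : ℕ) : ℝ) ^ (-p) ≤ x ^ (1 - p) / (p - 1) := by
  have hN : (0 : ℝ) < N := hx.trans_le hxN
  calc _ ≤ ∫ y in Set.Ioi (N : ℝ), y ^ (-p) :=
        AntitoneOn.tsum_comp_add_le_integral N
          ((Real.antitoneOn_rpow_Ioi_of_exponent_nonpos (by linarith)).mono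
            fun y hy => hN.trans_le hy)
          (integrableOn_Ioi_rpow_of_lt (by linarith) hN)
          fun y hy => Real.rpow_nonneg (hN.trans hy).le _
    _ = (N : ℝ) ^ (1 - p) / (p - 1) := by
        rw [integral_Ioi_rpow_of_lt (by linarith) hN, neg_div, ← div_neg]
        ring_nf
    _ ≤ x ^ (1 - p) / (p - 1) :=
        div_le_div_of_nonneg_right (Real.rpow_le_rpow_of_nonpos hx hxN (by linarith))
          (by linarith)

lemma tsum_inv_max_rpow_le {p : ℝ} (hp : 1 < p) {t : ℝ} (ht : 1 ≤ t) :
    Summable (fun d : ℕ => (max t ((d : ℝ) ^ p))⁻¹) ∧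
      ∑' d : ℕ, (max t ((d : ℝ) ^ p))⁻¹ ≤ (3 + (p - 1)⁻¹) * t ^ (p⁻¹ - 1) := by
  set f : ℕ → ℝ := fun d => (max t ((d : ℝ) ^ p))⁻¹
  have ht0 : 0 < t := by linarith
  set N := ⌈t ^ p⁻¹⌉₊
  have hs : 1 ≤ t ^ p⁻¹ := Real.one_le_rpow ht (by positivity)
  have hN : t ^ p⁻¹ ≤ N := Nat.le_ceil _
  have hN' : (N : ℝ) < t ^ p⁻¹ + 1 := Nat.ceil_lt_add_one (by positivity)
  have htail : ∀ n, f (n + (N + 1)) ≤ ((n + N + 1 : ℕ) : ℝ) ^ (-p) := fun n => by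
    rw [Real.rpow_neg (Nat.cast_nonneg _)]
    exact inv_anti₀ (by positivity) (le_max_right _ _)
  have hsum_rpow : Summable fun n : ℕ => ((n + N + 1 : ℕ) : ℝ) ^ (-p) :=
    (summable_nat_add_iff (N + 1)).mpr (Real.summable_nat_rpow.mpr (by linarith))
  have hsum_tail : Summable fun n => f (n + (N + 1)) :=
    Summable.of_nonneg_of_le (fun n => inv_nonneg.mpr (ht0.le.trans (le_max_left _ _))) htail
      hsum_rpow
  have hsum : Summable f := (summable_nat_add_iff (N + 1)).mp hsum_tail
  refine ⟨hsum, ?_⟩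
  have hhead : ∑ d ∈ Finset.range (N + 1), f d ≤ 3 * t ^ (p⁻¹ - 1) :=
    calc ∑ d ∈ Finset.range (N + 1), f d ≤ (Finset.range (N + 1)).card • t⁻¹ :=
          Finset.sum_le_card_nsmul _ f _ fun d _ => inv_anti₀ ht0 (le_max_left _ _)
      _ ≤ 3 * t ^ p⁻¹ * t⁻¹ := by
          rw [Finset.card_range, nsmul_eq_mul]
          gcongr
          push_cast
          linarith
      _ = 3 * t ^ (p⁻¹ - 1) := by rw [Real.rpow_sub_one ht0.ne']; ring
  have htail' : ∑' n, f (n + (N + 1)) ≤ (p - 1)⁻¹ * t ^ (p⁻¹ - 1) :=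
    calc ∑' n, f (n + (N + 1)) ≤ ∑' n : ℕ, ((n + N + 1 : ℕ) : ℝ) ^ (-p) :=
          hsum_tail.tsum_le_tsum htail hsum_rpow
      _ ≤ (t ^ p⁻¹) ^ (1 - p) / (p - 1) := tsum_rpow_neg_nat_add_le hp (by positivity) hN
      _ = (p - 1)⁻¹ * t ^ (p⁻¹ - 1) := by
          rw [← Real.rpow_mul ht0.le, div_eq_inv_mul]
          congr 2
          field_simp
  rw [← hsum.sum_add_tsum_nat_add (N + 1)]
  linarith

lemma sum_inv_mul_orderOf_natCast_le {b : ℕ} (hb : 2 ≤ b) {η t : ℝ} (hη : 0 < η) (S : Finset ℕ)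
    (hS : ∀ ℓ ∈ S, ℓ.Prime ∧ ¬ℓ ∣ b ∧ t ≤ ℓ ∧ (orderOf (b : ZMod ℓ) : ℝ) < (ℓ : ℝ) ^ η) :
    ∑ ℓ ∈ S, 1 / ((ℓ : ℝ) * orderOf (b : ZMod ℓ)) ≤
      (Nat.log 2 b + 1) * ∑ d ∈ S.image (fun ℓ => orderOf (b : ZMod ℓ)),
        (max t ((d : ℝ) ^ η⁻¹))⁻¹ := by
  classical
  rw [← Finset.sum_fiberwise_of_maps_to (g := fun ℓ => orderOf (b : ZMod ℓ))
    fun ℓ hℓ => Finset.mem_image_of_mem _ hℓ, Finset.mul_sum]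
  refine Finset.sum_le_sum fun d hd => ?_
  have hd0 : (0 : ℝ) < d := by
    obtain ⟨ℓ, hℓ, rfl⟩ := Finset.mem_image.mp hd
    exact_mod_cast orderOf_natCast_pos (hS ℓ hℓ).1 (hS ℓ hℓ).2.1
  have hterm : ∀ ℓ ∈ S.filter fun ℓ => orderOf (b : ZMod ℓ) = d,
      1 / ((ℓ : ℝ) * orderOf (b : ZMod ℓ)) ≤ ((d : ℝ) * max t ((d : ℝ) ^ η⁻¹))⁻¹ := by
    intro ℓ hℓ
    obtain ⟨hℓS, hord⟩ := Finset.mem_filter.mp hℓ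
    obtain ⟨-, -, htℓ, hordℓ⟩ := hS ℓ hℓS
    rw [hord] at hordℓ ⊢
    have hmax : max t ((d : ℝ) ^ η⁻¹) ≤ ℓ :=
      max_le htℓ ((Real.rpow_inv_lt_iff_of_pos hd0.le (Nat.cast_nonneg ℓ) hη).mpr hordℓ).le
    rw [one_div, mul_comm]
    exact inv_anti₀ (mul_pos hd0 (lt_max_of_lt_right (by positivity))) (by gcongr)
  have hcard : ((S.filter fun ℓ => orderOf (b : ZMod ℓ) = d).card : ℝ) ≤
      d * (Nat.log 2 b + 1) := by
    refine (Nat.cast_le.mpr (Finset.card_le_card fun ℓ hℓ => ?_)).trans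
      (by exact_mod_cast card_primeFactors_pow_sub_one_le b d)
    obtain ⟨hℓS, hord⟩ := Finset.mem_filter.mp hℓ
    rw [← hord]
    exact mem_primeFactors_pow_orderOf_natCast_sub_one hb (hS ℓ hℓS).1 (hS ℓ hℓS).2.1
  calc _ ≤ (S.filter fun ℓ => orderOf (b : ZMod ℓ) = d).card •
          ((d : ℝ) * max t ((d : ℝ) ^ η⁻¹))⁻¹ := Finset.sum_le_card_nsmul _ _ _ hterm
    _ ≤ d * (Nat.log 2 b + 1) * ((d : ℝ) * max t ((d : ℝ) ^ η⁻¹))⁻¹ := by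
        rw [nsmul_eq_mul]
        gcongr
    _ = _ := by
        rw [mul_inv]
        field_simp

lemma exists_sum_inv_mul_orderOf_natCast_le_rpow {b : ℕ} (hb : 2 ≤ b) {η : ℝ} (hη0 : 0 < η)
    (hη1 : η < 1) :
    ∃ K : ℝ, 0 < K ∧ ∀ t : ℝ, 1 ≤ t → ∀ S : Finset ℕ,
      (∀ ℓ ∈ S, ℓ.Prime ∧ ¬ℓ ∣ b ∧ t ≤ ℓ ∧ (orderOf (b : ZMod ℓ) : ℝ) < (ℓ : ℝ) ^ η) →
      ∑ ℓ ∈ S, 1 / ((ℓ : ℝ) * orderOf (b : ZMod ℓ)) ≤ K * t ^ (-(1 - η)) := by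
  have hp : 1 < η⁻¹ := (one_lt_inv₀ hη0).mpr hη1
  have hp' : 0 < (η⁻¹ - 1)⁻¹ := inv_pos.mpr (sub_pos.mpr hp)
  refine ⟨(Nat.log 2 b + 1) * (3 + (η⁻¹ - 1)⁻¹), by positivity, fun t ht S hS => ?_⟩
  obtain ⟨hsum, htsum⟩ := tsum_inv_max_rpow_le hp ht
  rw [inv_inv, show η - 1 = -(1 - η) by ring] at htsum
  calc _ ≤ _ := sum_inv_mul_orderOf_natCast_le hb hη0 S hS
    _ ≤ (Nat.log 2 b + 1) * ∑' d : ℕ, (max t ((d : ℝ) ^ η⁻¹))⁻¹ := by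
        gcongr
        exact hsum.sum_le_tsum _ fun d _ => inv_nonneg.mpr (by positivity)
    _ ≤ _ := by
        rw [mul_assoc]
        gcongr

/-- Fix an integer `b ≥ 2` and real `0 < η < 1`. There is `K > 0` (depending only on `b, η`)
such that for all real `t ≥ 1`, the sum `∑ 1/(ℓ·ord_ℓ(b))` over primes `ℓ ≥ t` with `ℓ ∤ b`
and `ord_ℓ(b) < ℓ^η` is at most `K · t^(-(1-η))`. -/
theorem stmt4 (b : ℕ) (hb : 2 ≤ b) (η : ℝ) (hη0 : 0 < η) (hη1 : η < 1) :
    ∃ K : ℝ, 0 < K ∧ ∀ t : ℝ, 1 ≤ t →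
      Summable (fun ℓ : {ℓ : ℕ // ℓ.Prime ∧ ¬ℓ ∣ b ∧ t ≤ ((ℓ : ℕ) : ℝ) ∧
          (orderOf ((b : ZMod (ℓ : ℕ))) : ℝ) < ((ℓ : ℕ) : ℝ) ^ η} =>
        (1 : ℝ) / (((ℓ : ℕ) : ℝ) * (orderOf ((b : ZMod (ℓ : ℕ))) : ℝ))) ∧
      ∑' ℓ : {ℓ : ℕ // ℓ.Prime ∧ ¬ℓ ∣ b ∧ t ≤ ((ℓ : ℕ) : ℝ) ∧
          (orderOf ((b : ZMod (ℓ : ℕ))) : ℝ) < ((ℓ : ℕ) : ℝ) ^ η},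
        (1 : ℝ) / (((ℓ : ℕ) : ℝ) * (orderOf ((b : ZMod (ℓ : ℕ))) : ℝ))
      ≤ K * t ^ (-(1 - η)) := by
  obtain ⟨K, hK, hsum_le⟩ := exists_sum_inv_mul_orderOf_natCast_le_rpow hb hη0 hη1
  refine ⟨K, hK, fun t ht => ?_⟩
  refine ⟨summable_of_sum_le (c := K * t ^ (-(1 - η))) (fun _ => by positivity) fun s => ?_,
    Real.tsum_le_of_sum_le (fun _ => by positivity) fun s => ?_⟩ <;>
  exact (Finset.sum_map s (Function.Embedding.subtype _) _).symm.trans_le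
    (hsum_le t ht _ fun ℓ hℓ => by
      obtain ⟨ℓ, -, rfl⟩ := Finset.mem_map.mp hℓ
      exact ℓ.2)
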